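/- Underestimation direction of the diffusion bias: if in addition E[Y1 | Z = 1] = E[Y1], E[Y0] = 0, E[Y0 | Z' = 0, Z = 0] = 0, and E[Y1 | Z' = 1, Z = 0] > 0, then b < 0, i.e. the naive no-diffusion contrast underestimates the post-diffusion average treatment effect. -/
import Mathlib


open MeasureTheory ProbabilityTheory

lemma integral_cond_eq' {Ω : Type*} [MeasurableSpace Ω] (μ : Measure Ω) (s : Set Ω) (f : Ω → ℝ) :
    ∫ ω, f ω ∂(μ[|s]) = (μ s).toReal⁻¹ * ∫ ω in s, f ω ∂μ := by
  rw [ProbabilityTheory.cond, integral_smul_measure, ENNReal.toReal_inv, smul_eq_mul]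

/-- Underestimation direction of the diffusion bias: if E[Y1 | Z = 1] = E[Y1], E[Y0] = 0,
E[Y0 | Z' = 0, Z = 0] = 0 and E[Y1 | Z' = 1, Z = 0] > 0, then b < 0. -/
theorem diffusion_bias_underestimation
    {Ω : Type*} [MeasurableSpace Ω] (μ : Measure Ω) [IsProbabilityMeasure μ]
    (Z Z' : Ω → ℝ) (hZ : Measurable Z) (hZ' : Measurable Z')
    (hZ01 : ∀ ω, Z ω = 0 ∨ Z ω = 1) (hZ'01 : ∀ ω, Z' ω = 0 ∨ Z' ω = 1)
    (Y0 Y1 Y : Ω → ℝ) (hY0 : Integrable Y0 μ) (hY1 : Integrable Y1 μ)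
    (hY : ∀ ω, Y ω = Z' ω * Y1 ω + (1 - Z' ω) * Y0 ω)
    (hZpos : 0 < μ {ω | Z ω = 1}) (hZlt : μ {ω | Z ω = 1} < 1)
    (hmono : μ[|{ω | Z ω = 1}] {ω | Z' ω = 1} = 1)
    (ρ : ℝ) (hρ : ρ = (μ[|{ω | Z ω = 0}] {ω | Z' ω = 1}).toReal)
    (hρ0 : 0 < ρ) (hρ1 : ρ < 1)
    (τstar τnodiff b : ℝ)
    (hτstar : τstar = ∫ ω, Y1 ω ∂μ - ∫ ω, Y0 ω ∂μ)
    (hτnodiff : τnodiff = ∫ ω, Y ω ∂(μ[|{ω | Z ω = 1}]) - ∫ ω, Y ω ∂(μ[|{ω | Z ω = 0}]))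
    (hb : b = τnodiff - τstar)
    (hrand : ∫ ω, Y1 ω ∂(μ[|{ω | Z ω = 1}]) = ∫ ω, Y1 ω ∂μ)
    (hY0zero : ∫ ω, Y0 ω ∂μ = 0)
    (hY0condzero : ∫ ω, Y0 ω ∂(μ[|{ω | Z' ω = 0 ∧ Z ω = 0}]) = 0)
    (hY1pos : 0 < ∫ ω, Y1 ω ∂(μ[|{ω | Z' ω = 1 ∧ Z ω = 0}])) :
    b < 0 := by
  classical
  set A1 : Set Ω := {ω | Z ω = 1} with hA1def
  set A0 : Set Ω := {ω | Z ω = 0} with hA0def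
  set B1 : Set Ω := {ω | Z' ω = 1} with hB1def
  set B0 : Set Ω := {ω | Z' ω = 0} with hB0def
  have mA1 : MeasurableSet A1 := hZ (measurableSet_singleton 1)
  have mA0 : MeasurableSet A0 := hZ (measurableSet_singleton 0)
  have mB1 : MeasurableSet B1 := hZ' (measurableSet_singleton 1)
  have mB0 : MeasurableSet B0 := hZ' (measurableSet_singleton 0)
  have hB0c : B0 = B1ᶜ := by
    ext ω
    simp only [hB0def, hB1def, Set.mem_setOf_eq, Set.mem_compl_iff]
    rcases hZ'01 ω with h | h <;> simp [h]
  have hA1ne : μ A1 ≠ 0 := hZpos.ne'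
  have hA1top : μ A1 ≠ ⊤ := (measure_lt_top μ A1).ne
  have hA0ne : μ A0 ≠ 0 := by
    intro h0
    have huniv : μ (A0 ∪ A1) = 1 := by
      have h : A0 ∪ A1 = Set.univ := by
        ext ω
        simp only [Set.mem_union, Set.mem_univ, iff_true, hA0def, hA1def, Set.mem_setOf_eq]
        exact hZ01 ω
      rw [h]; exact measure_univ
    have hle : μ (A0 ∪ A1) ≤ μ A0 + μ A1 := measure_union_le _ _
    rw [huniv, h0, zero_add] at hle
    exact absurd hle (not_le_of_gt hZlt)
  have hA0top : μ A0 ≠ ⊤ := (measure_lt_top μ A0).ne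
  -- disjointness
  have hdisj : ∀ s : Set Ω, Disjoint (s ∩ B1) (s ∩ B0) := by
    intro s
    rw [hB0c]
    exact disjoint_compl_right.mono Set.inter_subset_right Set.inter_subset_right
  have hsplitset : ∀ s : Set Ω, s = (s ∩ B1) ∪ (s ∩ B0) := by
    intro s
    rw [hB0c, ← Set.inter_union_distrib_left, Set.union_compl_self, Set.inter_univ]
  -- μ (A1 ∩ B0) = 0
  have hA1B1 : μ (A1 ∩ B1) = μ A1 := by
    have h := hmono
    rw [cond_apply mA1] at h
    have h2 : μ A1 * ((μ A1)⁻¹ * μ (A1 ∩ B1)) = μ A1 * 1 := by rw [h]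
    rwa [← mul_assoc, ENNReal.mul_inv_cancel hA1ne hA1top, one_mul, mul_one] at h2
  have hA1B0 : μ (A1 ∩ B0) = 0 := by
    have hsplit : μ (A1 ∩ B1) + μ (A1 \ B1) = μ A1 := measure_inter_add_diff A1 mB1
    rw [hA1B1] at hsplit
    have hz : μ (A1 \ B1) = 0 := by
      by_contra hne
      have : μ A1 < μ A1 + μ (A1 \ B1) :=
        ENNReal.lt_add_right hA1top hne
      exact absurd hsplit this.ne'
    rw [hB0c, ← Set.diff_eq]
    exact hz
  -- μ (A0 ∩ B0) ≠ 0 (from ρ < 1)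
  have hA0B0ne : μ (A0 ∩ B0) ≠ 0 := by
    intro h0
    have hsplit : μ (A0 ∩ B1) + μ (A0 \ B1) = μ A0 := measure_inter_add_diff A0 mB1
    have hd : μ (A0 \ B1) = 0 := by rwa [Set.diff_eq, ← hB0c]
    rw [hd, add_zero] at hsplit
    have : ρ = 1 := by
      rw [hρ, cond_apply mA0]
      show ((μ A0)⁻¹ * μ (A0 ∩ B1)).toReal = 1
      rw [hsplit, ENNReal.inv_mul_cancel hA0ne hA0top, ENNReal.toReal_one]
    linarith
  -- pointwise equalities
  have hYeqB1 : ∀ s : Set Ω, Set.EqOn Y Y1 (s ∩ B1) := by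
    intro s ω hω
    have h1 : Z' ω = 1 := hω.2
    rw [hY ω, h1]; ring
  have hYeqB0 : ∀ s : Set Ω, Set.EqOn Y Y0 (s ∩ B0) := by
    intro s ω hω
    have h1 : Z' ω = 0 := hω.2
    rw [hY ω, h1]; ring
  -- integrability on pieces
  have hIntYB1 : ∀ s : Set Ω, MeasurableSet s → IntegrableOn Y (s ∩ B1) μ :=
    fun s hs => (hY1.integrableOn.mono_set Set.inter_subset_left).congr_fun
      (fun ω hω => ((hYeqB1 s) hω).symm) (hs.inter mB1)
  have hIntYB0 : ∀ s : Set Ω, MeasurableSet s → IntegrableOn Y (s ∩ B0) μ :=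
    fun s hs => (hY0.integrableOn.mono_set Set.inter_subset_left).congr_fun
      (fun ω hω => ((hYeqB0 s) hω).symm) (hs.inter mB0)
  -- splitting integrals
  have hsplitint : ∀ s : Set Ω, MeasurableSet s →
      ∫ ω in s, Y ω ∂μ = ∫ ω in s ∩ B1, Y1 ω ∂μ + ∫ ω in s ∩ B0, Y0 ω ∂μ := by
    intro s hs
    calc ∫ ω in s, Y ω ∂μ = ∫ ω in (s ∩ B1) ∪ (s ∩ B0), Y ω ∂μ := by rw [← hsplitset s]
      _ = ∫ ω in s ∩ B1, Y ω ∂μ + ∫ ω in s ∩ B0, Y ω ∂μ :=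
          setIntegral_union (hdisj s) (hs.inter mB0) (hIntYB1 s hs) (hIntYB0 s hs)
      _ = ∫ ω in s ∩ B1, Y1 ω ∂μ + ∫ ω in s ∩ B0, Y0 ω ∂μ := by
          rw [setIntegral_congr_fun (hs.inter mB1) (hYeqB1 s),
            setIntegral_congr_fun (hs.inter mB0) (hYeqB0 s)]
  -- integral of Y over A1 equals integral of Y1 over A1
  have hintA1 : ∫ ω in A1, Y ω ∂μ = ∫ ω in A1, Y1 ω ∂μ := by
    have hz0 : ∫ ω in A1 ∩ B0, Y0 ω ∂μ = 0 := by
      rw [Measure.restrict_eq_zero.mpr hA1B0]; exact integral_zero_measure _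
    have hz1 : ∫ ω in A1 ∩ B0, Y1 ω ∂μ = 0 := by
      rw [Measure.restrict_eq_zero.mpr hA1B0]; exact integral_zero_measure _
    have hsplit1 : ∫ ω in A1, Y1 ω ∂μ
        = ∫ ω in A1 ∩ B1, Y1 ω ∂μ + ∫ ω in A1 ∩ B0, Y1 ω ∂μ := by
      calc ∫ ω in A1, Y1 ω ∂μ = ∫ ω in (A1 ∩ B1) ∪ (A1 ∩ B0), Y1 ω ∂μ := by rw [← hsplitset A1]
        _ = _ := setIntegral_union (hdisj A1) (mA1.inter mB0)
            (hY1.integrableOn.mono_set Set.inter_subset_left)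
            (hY1.integrableOn.mono_set Set.inter_subset_left)
    rw [hsplitint A1 mA1, hz0, hsplit1, hz1]
  -- ∫ Y0 over A0 ∩ B0 = 0
  have hA0B0zero : ∫ ω in A0 ∩ B0, Y0 ω ∂μ = 0 := by
    have h := hY0condzero
    have hset : {ω | Z' ω = 0 ∧ Z ω = 0} = A0 ∩ B0 := by
      ext ω; simp only [Set.mem_setOf_eq, Set.mem_inter_iff, hA0def, hB0def, and_comm]
    rw [hset, integral_cond_eq'] at h
    have hpos : (0:ℝ) < ((μ (A0 ∩ B0)).toReal)⁻¹ :=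
      inv_pos.mpr (ENNReal.toReal_pos hA0B0ne (measure_lt_top μ _).ne)
    exact (mul_eq_zero.mp h).resolve_left hpos.ne'
  -- ∫ Y1 over A0 ∩ B1 > 0
  have hA0B1pos : 0 < ∫ ω in A0 ∩ B1, Y1 ω ∂μ := by
    have h := hY1pos
    have hset : {ω | Z' ω = 1 ∧ Z ω = 0} = A0 ∩ B1 := by
      ext ω; simp only [Set.mem_setOf_eq, Set.mem_inter_iff, hA0def, hB1def, and_comm]
    rw [hset, integral_cond_eq'] at h
    by_contra hle
    push_neg at hle
    have : ((μ (A0 ∩ B1)).toReal)⁻¹ * ∫ ω in A0 ∩ B1, Y1 ω ∂μ ≤ 0 :=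
      mul_nonpos_of_nonneg_of_nonpos (inv_nonneg.mpr ENNReal.toReal_nonneg) hle
    linarith
  -- compute τnodiff
  have hE1 : ∫ ω, Y ω ∂(μ[|A1]) = ∫ ω, Y1 ω ∂μ := by
    rw [integral_cond_eq', hintA1, ← integral_cond_eq', hrand]
  have hE0 : ∫ ω, Y ω ∂(μ[|A0]) = ((μ A0).toReal)⁻¹ * ∫ ω in A0 ∩ B1, Y1 ω ∂μ := by
    rw [integral_cond_eq', hsplitint A0 mA0, hA0B0zero, add_zero]
  have hA0pos : (0:ℝ) < (μ A0).toReal := ENNReal.toReal_pos hA0ne hA0top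
  have hbeq : b = -(((μ A0).toReal)⁻¹ * ∫ ω in A0 ∩ B1, Y1 ω ∂μ) := by
    rw [hb, hτnodiff, hτstar, hE1, hE0, hY0zero]
    ring
  rw [hbeq]
  exact neg_neg_iff_pos.mpr (mul_pos (inv_pos.mpr hA0pos) hA0B1pos)
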